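/- arXiv:2105.04728 — 2 statements merged into one kernel-verified Lean document; each statement's English description precedes it below -/
import Mathlib

section
/- The inventory function Φ is non-increasing on [1, ∞); moreover, if 1 ≤ π < π' and Φ(π) > 0, then Φ(π') < Φ(π). -/
/-!
With `a = d_t - max_{k ≤ t} d_k ≤ 0` and `σ = σ(d^t)`, one has
`(π/π') (a + σ/π) = (π/π') a + σ/π' ≥ a + σ/π'` for `0 < π ≤ π'`, so
`δ_t(π', d) ≤ (π/π') δ_t(π, d)` slot by slot. Summing and taking suprema gives
`Φ(π') ≤ (π/π') Φ(π)`; the supremum is finite because `δ_t(π, d) ≤ σ(d^t)/π ≤ dmax/π`.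
-/

open Finset MeasureTheory

noncomputable section

/-- A discharging vector `δ` is feasible for demand profile `d` (with capacity `c`
and per-slot limit `dmax`). -/
def Feasible {T : ℕ} (c dmax : ℝ) (d δ : Fin T → ℝ) : Prop :=
  (∑ t, δ t) ≤ c ∧ ∀ t, 0 ≤ δ t ∧ δ t ≤ min dmax (d t)

/-- Peak-demand reduction `R(d, δ)`. -/
noncomputable def Red {T : ℕ} (d δ : Fin T → ℝ) : ℝ :=
  (⨆ t, d t) - ⨆ t, (d t - δ t)

/-- Offline optimal peak-demand reduction `σ(d)`. -/
noncomputable def offOpt {T : ℕ} (c dmax : ℝ) (d : Fin T → ℝ) : ℝ :=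
  sSup {r | ∃ δ : Fin T → ℝ, Feasible c dmax d δ ∧ r = Red d δ}

/-- Prefix maximum `max_{k ∈ [t]} d_k`. -/
noncomputable def prefMax {T : ℕ} (d : Fin T → ℝ) (t : Fin T) : ℝ :=
  ⨆ k : {k : Fin T // k ≤ t}, d k.1

/-- The uncertainty set `D`: all profiles with entries in `[dlo, dhi]`. -/
def inD {T : ℕ} (dlo dhi : ℝ) (d : Fin T → ℝ) : Prop :=
  ∀ t, dlo ≤ d t ∧ d t ≤ dhi

/-- Reference profile `d^t`: observed demands up to slot `t`, lowest demand `dlo` afterwards. -/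
def ref {T : ℕ} (dlo : ℝ) (d : Fin T → ℝ) (t : Fin T) : Fin T → ℝ :=
  fun k => if k ≤ t then d k else dlo

/-- Output of `pCR-PRM(π)` at slot `t`:
`δ_t(π, d) = [d_t − max_{k∈[t]} d_k + σ(d^t)/π]⁺`. -/
noncomputable def pcr {T : ℕ} (c dmax dlo : ℝ) (π : ℝ) (d : Fin T → ℝ) (t : Fin T) : ℝ :=
  max (d t - prefMax d t + offOpt c dmax (ref dlo d t) / π) 0

/-- Inventory function `Φ(π) = sup_{d ∈ D} ∑_t δ_t(π, d)`. -/
noncomputable def Phi (T : ℕ) (c dmax dlo dhi : ℝ) (π : ℝ) : ℝ :=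
  sSup {s | ∃ d : Fin T → ℝ, inD dlo dhi d ∧ s = ∑ t, pcr c dmax dlo π d t}

lemma Real.sSup_image_le_mul {α : Type*} {s : Set α} {f g : α → ℝ} {k : ℝ} (hk : 0 ≤ k)
    (hg : BddAbove (g '' s)) (hg₀ : ∀ x ∈ s, 0 ≤ g x) (hfg : ∀ x ∈ s, f x ≤ k * g x) :
    sSup (f '' s) ≤ k * sSup (g '' s) := by
  have hsup₀ : 0 ≤ sSup (g '' s) := Real.sSup_nonneg <| by
    rintro _ ⟨x, hx, rfl⟩
    exact hg₀ x hx
  refine Real.sSup_le ?_ (mul_nonneg hk hsup₀)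
  rintro _ ⟨x, hx, rfl⟩
  exact (hfg x hx).trans <| mul_le_mul_of_nonneg_left (le_csSup hg ⟨x, hx, rfl⟩) hk

lemma max_add_div_le_div_mul_max_add_div {a σ π π' : ℝ} (ha : a ≤ 0)
    (hπ : 0 < π) (hππ' : π ≤ π') :
    max (a + σ / π') 0 ≤ π / π' * max (a + σ / π) 0 := by
  have hπ' : 0 < π' := hπ.trans_le hππ'
  have hratio : π / π' ≤ 1 := div_le_one_of_le₀ hππ' hπ'.le
  refine max_le ?_ (by positivity)
  calc a + σ / π'
      ≤ π / π' * a + σ / π' := by nlinarith [div_nonneg hπ.le hπ'.le]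
    _ = π / π' * (a + σ / π) := by field_simp
    _ ≤ π / π' * max (a + σ / π) 0 := by gcongr; exact le_max_left _ _

section

variable {T : ℕ}

lemma Red_le (hT : 0 < T) (d : Fin T → ℝ) {δ : Fin T → ℝ} {b : ℝ} (hδ : ∀ t, δ t ≤ b) :
    Red d δ ≤ b := by
  have : Nonempty (Fin T) := Fin.pos_iff_nonempty.1 hT
  rw [Red, sub_le_iff_le_add']
  refine ciSup_le fun t => ?_
  linarith [hδ t, le_ciSup (Set.finite_range fun k => d k - δ k).bddAbove t]

lemma offOpt_le (hT : 0 < T) (c : ℝ) {dmax : ℝ} (hdmax : 0 ≤ dmax) (d : Fin T → ℝ) :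
    offOpt c dmax d ≤ dmax :=
  Real.sSup_le (by
    rintro _ ⟨δ, hδ, rfl⟩
    exact Red_le hT d fun t => (hδ.2 t).2.trans (min_le_left _ _)) hdmax

lemma le_prefMax (d : Fin T → ℝ) (t : Fin T) : d t ≤ prefMax d t :=
  le_ciSup (Set.finite_range fun k : {k : Fin T // k ≤ t} => d k).bddAbove ⟨t, le_rfl⟩

lemma pcr_nonneg (c dmax dlo π : ℝ) (d : Fin T → ℝ) (t : Fin T) :
    0 ≤ pcr c dmax dlo π d t :=
  le_max_right _ _

lemma pcr_le_div (hT : 0 < T) (c : ℝ) {dmax : ℝ} (hdmax : 0 ≤ dmax) (dlo : ℝ) {π : ℝ}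
    (hπ : 0 ≤ π) (d : Fin T → ℝ) (t : Fin T) : pcr c dmax dlo π d t ≤ dmax / π := by
  have hσ : offOpt c dmax (ref dlo d t) / π ≤ dmax / π :=
    div_le_div_of_nonneg_right (offOpt_le hT c hdmax _) hπ
  exact max_le (by linarith [le_prefMax d t]) (div_nonneg hdmax hπ)

lemma pcr_le_div_mul (c dmax dlo : ℝ) {π π' : ℝ} (hπ : 0 < π) (hππ' : π ≤ π')
    (d : Fin T → ℝ) (t : Fin T) :
    pcr c dmax dlo π' d t ≤ π / π' * pcr c dmax dlo π d t :=
  max_add_div_le_div_mul_max_add_div (sub_nonpos.2 (le_prefMax d t)) hπ hππ'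

end

lemma Phi_eq_sSup_image (T : ℕ) (c dmax dlo dhi π : ℝ) :
    Phi T c dmax dlo dhi π =
      sSup ((fun d : Fin T → ℝ => ∑ t, pcr c dmax dlo π d t) '' {d | inD dlo dhi d}) := by
  simp only [Phi, Set.image, Set.mem_ofPred_eq, eq_comm]

lemma Phi_nonneg (T : ℕ) (c dmax dlo dhi π : ℝ) : 0 ≤ Phi T c dmax dlo dhi π :=
  Real.sSup_nonneg <| by
    rintro _ ⟨d, -, rfl⟩
    exact sum_nonneg fun t _ => pcr_nonneg c dmax dlo π d t

lemma Phi_le_div_mul {T : ℕ} (hT : 0 < T) (c : ℝ) {dmax : ℝ} (hdmax : 0 ≤ dmax) (dlo dhi : ℝ)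
    {π π' : ℝ} (hπ : 0 < π) (hππ' : π ≤ π') :
    Phi T c dmax dlo dhi π' ≤ π / π' * Phi T c dmax dlo dhi π := by
  rw [Phi_eq_sSup_image, Phi_eq_sSup_image]
  refine Real.sSup_image_le_mul (div_nonneg hπ.le (hπ.trans_le hππ').le) ?_
    (fun d _ => sum_nonneg fun t _ => pcr_nonneg c dmax dlo π d t) fun d _ => ?_
  · refine ⟨T * (dmax / π), ?_⟩
    rintro _ ⟨d, -, rfl⟩
    simpa using sum_le_sum fun t (_ : t ∈ univ) => pcr_le_div hT c hdmax dlo hπ.le d t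
  · rw [mul_sum]
    exact sum_le_sum fun t _ => pcr_le_div_mul c dmax dlo hπ hππ' d t

theorem stmt9_general (T : ℕ) (hT : 0 < T) (c dmax dlo dhi : ℝ)
    (hdmax : 0 < dmax) :
    (∀ π π' : ℝ, 1 ≤ π → π ≤ π' →
      Phi T c dmax dlo dhi π' ≤ Phi T c dmax dlo dhi π) ∧
    (∀ π π' : ℝ, 1 ≤ π → π < π' → 0 < Phi T c dmax dlo dhi π →
      Phi T c dmax dlo dhi π' < Phi T c dmax dlo dhi π) := by
  have hcontract {π π' : ℝ} (hπ : 1 ≤ π) (hππ' : π ≤ π') :=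
    Phi_le_div_mul hT c hdmax.le dlo dhi (zero_lt_one.trans_le hπ) hππ'
  refine ⟨fun π π' hπ hππ' => ?_, fun π π' hπ hππ' hpos => ?_⟩
  · calc Phi T c dmax dlo dhi π'
        ≤ π / π' * Phi T c dmax dlo dhi π := hcontract hπ hππ'
      _ ≤ Phi T c dmax dlo dhi π :=
        mul_le_of_le_one_left (Phi_nonneg ..) (div_le_one_of_le₀ hππ' (by linarith))
  · calc Phi T c dmax dlo dhi π'
        ≤ π / π' * Phi T c dmax dlo dhi π := hcontract hπ hππ'.le
      _ < Phi T c dmax dlo dhi π :=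
        mul_lt_of_lt_one_left hpos ((div_lt_one (by linarith)).2 hππ')

/-- `Φ` is non-increasing on `[1, ∞)` and strictly decreasing where positive. -/
theorem stmt9 (T : ℕ) (hT : 0 < T) (c dmax dlo dhi : ℝ)
    (hc : 0 < c) (hdmax : 0 < dmax) (hdlo : 0 < dlo) (hbd : dlo ≤ dhi) :
    (∀ π π' : ℝ, 1 ≤ π → π ≤ π' →
      Phi T c dmax dlo dhi π' ≤ Phi T c dmax dlo dhi π) ∧
    (∀ π π' : ℝ, 1 ≤ π → π < π' → 0 < Phi T c dmax dlo dhi π →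
      Phi T c dmax dlo dhi π' < Phi T c dmax dlo dhi π) :=
  stmt9_general T hT c dmax dlo dhi hdmax
end
end

section
/- The map d ↦ σ(d) is continuous on the open positive orthant {d ∈ ℝ^T : d_t > 0 for all t}. -/
open Finset MeasureTheory

noncomputable section

/-
`σ` is `2`-Lipschitz for the sup metric on the nonnegative orthant. If `δ` is feasible for `d`
and `‖d - d'‖ ≤ ε`, then `δ ⊓ d'` is feasible for `d'`; the peak `max d` moves by at most `ε`,
and since `d' - δ ⊓ d' = (d' - δ)⁺ ≤ d - δ + ε`, so does the reduced peak. Hence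
`σ(d) ≤ σ(d') + 2ε`, and symmetrically.
-/

theorem ciSup_le_ciSup_add {ι : Type*} [Finite ι] [Nonempty ι] {f g : ι → ℝ} {ε : ℝ}
    (h : ∀ t, f t ≤ g t + ε) : ⨆ t, f t ≤ (⨆ t, g t) + ε :=
  ciSup_le fun t => (h t).trans (add_le_add_left (Finite.le_ciSup g t) ε)

namespace Feasible

variable {T : ℕ} {c dmax : ℝ} {d d' δ : Fin T → ℝ}

theorem zero (hc : 0 ≤ c) (hdmax : 0 ≤ dmax) (hd : 0 ≤ d) : Feasible c dmax d 0 :=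
  ⟨by simpa using hc, fun t => ⟨le_rfl, le_min hdmax (hd t)⟩⟩

theorem le_demand (h : Feasible c dmax d δ) (t : Fin T) : δ t ≤ d t :=
  (h.2 t).2.trans (min_le_right _ _)

theorem inf_demand (h : Feasible c dmax d δ) (hd' : 0 ≤ d') : Feasible c dmax d' (δ ⊓ d') := by
  refine ⟨(Finset.sum_le_sum fun t _ => inf_le_left).trans h.1, fun t => ⟨?_, ?_⟩⟩
  · exact le_inf (h.2 t).1 (hd' t)
  · exact le_min (inf_le_left.trans ((h.2 t).2.trans (min_le_left _ _))) inf_le_right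

end Feasible

section Reduction

variable {T : ℕ} [Nonempty (Fin T)] {c dmax : ℝ} {d d' δ : Fin T → ℝ}

theorem red_le_iSup (h : Feasible c dmax d δ) : Red d δ ≤ ⨆ t, d t := by
  obtain ⟨t⟩ := ‹Nonempty (Fin T)›
  have hpeak : 0 ≤ ⨆ t, (d t - δ t) :=
    (sub_nonneg.2 (h.le_demand t)).trans (Finite.le_ciSup (fun t => d t - δ t) t)
  unfold Red
  linarith

theorem bddAbove_reductions (c dmax : ℝ) (d : Fin T → ℝ) :
    BddAbove {r | ∃ δ : Fin T → ℝ, Feasible c dmax d δ ∧ r = Red d δ} :=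
  ⟨⨆ t, d t, by rintro r ⟨δ, h, rfl⟩; exact red_le_iSup h⟩

theorem red_le_offOpt (h : Feasible c dmax d δ) : Red d δ ≤ offOpt c dmax d :=
  le_csSup (bddAbove_reductions c dmax d) ⟨δ, h, rfl⟩

theorem offOpt_nonneg (hc : 0 ≤ c) (hdmax : 0 ≤ dmax) (hd : 0 ≤ d) : 0 ≤ offOpt c dmax d := by
  simpa [Red] using red_le_offOpt (Feasible.zero hc hdmax hd)

theorem red_le_red_inf_add (h : Feasible c dmax d δ) {ε : ℝ} (hε : ∀ t, |d t - d' t| ≤ ε) :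
    Red d δ ≤ Red d' (δ ⊓ d') + 2 * ε := by
  have hpeak : ⨆ t, d t ≤ (⨆ t, d' t) + ε :=
    ciSup_le_ciSup_add fun t => by linarith [(abs_le.1 (hε t)).2]
  have hreduced : ⨆ t, (d' t - (δ ⊓ d') t) ≤ (⨆ t, (d t - δ t)) + ε := by
    refine ciSup_le_ciSup_add fun t => ?_
    have hδd := h.le_demand t
    have hdd' := (abs_le.1 (hε t)).1
    have hε0 := (abs_nonneg _).trans (hε t)
    show d' t - min (δ t) (d' t) ≤ d t - δ t + ε
    rcases min_choice (δ t) (d' t) with hmin | hmin <;> rw [hmin] <;> linarith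
  unfold Red
  linarith

theorem offOpt_le_offOpt_add (hc : 0 ≤ c) (hdmax : 0 ≤ dmax) (hd' : 0 ≤ d') {ε : ℝ}
    (hε : ∀ t, |d t - d' t| ≤ ε) : offOpt c dmax d ≤ offOpt c dmax d' + 2 * ε := by
  have hε0 : 0 ≤ ε := (abs_nonneg _).trans (hε (Classical.arbitrary _))
  refine Real.sSup_le ?_ (by linarith [offOpt_nonneg hc hdmax hd'])
  rintro r ⟨δ, h, rfl⟩
  linarith [red_le_red_inf_add h hε, red_le_offOpt (h.inf_demand hd')]

theorem lipschitzOnWith_offOpt (hc : 0 ≤ c) (hdmax : 0 ≤ dmax) :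
    LipschitzOnWith 2 (offOpt (T := T) c dmax) {d | 0 ≤ d} := by
  refine LipschitzOnWith.of_le_add_mul 2 fun d _ d' hd' => ?_
  refine offOpt_le_offOpt_add hc hdmax hd' fun t => ?_
  rw [← Real.dist_eq]
  exact dist_le_pi_dist d d' t

end Reduction

/-- `d ↦ σ(d)` is continuous on the open positive orthant. -/
theorem stmt11 (T : ℕ) (hT : 0 < T) (c dmax : ℝ) (hc : 0 < c) (hdmax : 0 < dmax) :
    ContinuousOn (fun d : Fin T → ℝ => offOpt c dmax d)
      {d : Fin T → ℝ | ∀ t, 0 < d t} := by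
  have : Nonempty (Fin T) := ⟨⟨0, hT⟩⟩
  exact ((lipschitzOnWith_offOpt hc.le hdmax.le).continuousOn).mono
    fun d hd t => (hd t).le
end
end
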